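/- (C-bound with self-labeling) Let ρ be a probability measure on a set H of voters with bounded measurable evaluations, let P_T be a probability measure on X × {-1,+1} with X-marginal D_T, and let l : X → {-1,+1} be a measurable self-labeling function such that ν₁ = ∫_X l(x)·(∫_H h(x) dρ(h)) dD_T(x) > 0. Then the target risk of the ρ-weighted majority vote satisfies P_T[{(x,y) : y·∫_H h(x) dρ(h) ≤ 0}] ≤ 1 − ν₁² / μ₂ + (1/2)∫_{X×Y} |y − l(x)| dP_T(x,y), where μ₂ = ∫_{H×H} (∫_X h(x)h'(x) dD_T(x)) d(ρ⊗ρ)(h,h'). -/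

import Mathlib

/-!
Cantelli's inequality `1[m ≤ 0] ≤ (1 - t m)²` (`t ≥ 0`), integrated and optimised at
`t = ν₁ / μ₂`, bounds the probability that the self-labeled margin `l(x) ∫ h(x) dρ` is nonpositive
by `1 - ν₁² / μ₂`: since `l² = 1` its second moment is `∫ (∫ h(x) dρ)² dD_T`, which is `μ₂` by
Fubini. Where the true label agrees with `l` the two margins coincide, and elsewhere the error
indicator is at most `1 = |y - l(x)| / 2`.
-/

open MeasureTheory

section CBound

variable {α : Type*} [MeasurableSpace α] {μ : Measure α} [IsProbabilityMeasure μ] {M : α → ℝ}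

lemma ite_nonpos_le_sq_one_sub_mul {m t : ℝ} (ht : 0 ≤ t) :
    (if m ≤ 0 then (1 : ℝ) else 0) ≤ (1 - t * m) ^ 2 := by
  split_ifs with hm
  · nlinarith [mul_nonpos_of_nonneg_of_nonpos ht hm]
  · positivity

lemma measureReal_nonpos_le_quadratic (hM : Measurable M) (hM2 : MemLp M 2 μ) {t : ℝ}
    (ht : 0 ≤ t) :
    μ.real {x | M x ≤ 0} ≤ 1 - 2 * t * ∫ x, M x ∂μ + t ^ 2 * ∫ x, M x ^ 2 ∂μ := by
  have hM1 : Integrable M μ := hM2.integrable one_le_two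
  have hlin : Integrable (fun x => 1 - 2 * t * M x) μ := (integrable_const 1).sub (hM1.const_mul _)
  have hquad : Integrable (fun x => t ^ 2 * M x ^ 2) μ := hM2.integrable_sq.const_mul _
  have hnonpos : MeasurableSet {x | M x ≤ 0} := measurableSet_le hM measurable_const
  calc μ.real {x | M x ≤ 0} = ∫ x, {x | M x ≤ 0}.indicator 1 x ∂μ :=
        (integral_indicator_one hnonpos).symm
    _ ≤ ∫ x, 1 - 2 * t * M x + t ^ 2 * M x ^ 2 ∂μ := by
        refine integral_mono ((integrable_const 1).indicator hnonpos) (hlin.add hquad) fun x => ?_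
        have := ite_nonpos_le_sq_one_sub_mul (m := M x) ht
        simp only [Set.indicator_apply, Set.mem_ofPred_eq, Pi.one_apply]
        linarith
    _ = 1 - 2 * t * ∫ x, M x ∂μ + t ^ 2 * ∫ x, M x ^ 2 ∂μ := by
        rw [integral_add hlin hquad, integral_sub (integrable_const 1) (hM1.const_mul _),
          integral_const_mul, integral_const_mul, integral_const, probReal_univ, one_smul]

/-- Cantelli's inequality at `0`; for the margin `M` of a majority vote this is the C-bound. -/
theorem measureReal_nonpos_le_one_sub_sq_integral_div (hM : Measurable M) (hM2 : MemLp M 2 μ)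
    (hν : 0 ≤ ∫ x, M x ∂μ) :
    μ.real {x | M x ≤ 0} ≤ 1 - (∫ x, M x ∂μ) ^ 2 / ∫ x, M x ^ 2 ∂μ := by
  rcases (integral_nonneg fun x => sq_nonneg (M x) : 0 ≤ ∫ x, M x ^ 2 ∂μ).eq_or_lt with h0 | hμ₂
  · rw [← h0, div_zero, sub_zero]
    exact measureReal_le_one
  · convert measureReal_nonpos_le_quadratic hM hM2 (div_nonneg hν hμ₂.le) using 1
    field_simp
    ring

end CBound

section SelfLabeling

lemma ite_mul_nonpos_le_add_abs_sub {y l m : ℝ} (hy : y = 1 ∨ y = -1) (hl : l = 1 ∨ l = -1) :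
    (if y * m ≤ 0 then (1 : ℝ) else 0) ≤ (if l * m ≤ 0 then 1 else 0) + 1 / 2 * |y - l| := by
  rcases hy with rfl | rfl <;> rcases hl with rfl | rfl <;> split_ifs <;> norm_num

variable {X : Type*} [MeasurableSpace X]

theorem measureReal_mul_nonpos_le_self_labeling (P : Measure (X × ℝ)) [IsFiniteMeasure P]
    {g l : X → ℝ} (hg : Measurable g) (hl : Measurable l) (hlY : ∀ x, l x = 1 ∨ l x = -1)
    (hY : ∀ᵐ p ∂P, p.2 = 1 ∨ p.2 = -1) :
    P.real {p | p.2 * g p.1 ≤ 0} ≤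
      P.real {p | l p.1 * g p.1 ≤ 0} + (1 / 2) * ∫ p, |p.2 - l p.1| ∂P := by
  have hA : MeasurableSet {p : X × ℝ | p.2 * g p.1 ≤ 0} :=
    measurableSet_le (measurable_snd.mul (hg.comp measurable_fst)) measurable_const
  have hB : MeasurableSet {p : X × ℝ | l p.1 * g p.1 ≤ 0} :=
    measurableSet_le ((hl.mul hg).comp measurable_fst) measurable_const
  have hdev : Integrable (fun p : X × ℝ => 1 / 2 * |p.2 - l p.1|) P := by
    refine Integrable.of_bound
      ((measurable_snd.sub (hl.comp measurable_fst)).abs.const_mul _).aestronglyMeasurable 1 ?_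
    filter_upwards [hY] with p hp
    rcases hp with h | h <;> rcases hlY p.1 with h' | h' <;> norm_num [h, h']
  have hIA : Integrable ({p : X × ℝ | p.2 * g p.1 ≤ 0}.indicator (1 : X × ℝ → ℝ)) P :=
    (integrable_const 1).indicator hA
  have hIB : Integrable ({p : X × ℝ | l p.1 * g p.1 ≤ 0}.indicator (1 : X × ℝ → ℝ)) P :=
    (integrable_const 1).indicator hB
  rw [← integral_indicator_one hA, ← integral_indicator_one hB, ← integral_const_mul,
    ← integral_add hIB hdev]
  refine integral_mono_ae hIA (hIB.add hdev) ?_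
  filter_upwards [hY] with p hp
  simpa only [Set.indicator_apply, Set.mem_ofPred_eq, Pi.one_apply]
    using ite_mul_nonpos_le_add_abs_sub (m := g p.1) hp (hlY p.1)

end SelfLabeling

section Voters

variable {X H : Type*} [MeasurableSpace X] [MeasurableSpace H] {f : H → X → ℝ}

theorem integral_prod_integral_mul_eq_integral_sq (ρ : Measure H) [IsFiniteMeasure ρ]
    (D : Measure X) [IsFiniteMeasure D] (hf : Measurable (fun p : H × X => f p.1 p.2)) {C : ℝ}
    (hC : ∀ h x, |f h x| ≤ C) :
    ∫ q : H × H, (∫ x, f q.1 x * f q.2 x ∂D) ∂(ρ.prod ρ) = ∫ x, (∫ h, f h x ∂ρ) ^ 2 ∂D := by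
  have hprod : Integrable (Function.uncurry fun (q : H × H) (x : X) => f q.1 x * f q.2 x)
      ((ρ.prod ρ).prod D) := by
    refine Integrable.of_bound (((hf.comp (measurable_fst.fst.prodMk measurable_snd)).mul
      (hf.comp (measurable_fst.snd.prodMk measurable_snd))).aestronglyMeasurable) (C * C)
      (.of_forall fun z => ?_)
    change |f z.1.1 z.2 * f z.1.2 z.2| ≤ C * C
    rw [abs_mul]
    exact mul_le_mul (hC _ _) (hC _ _) (abs_nonneg _) ((abs_nonneg _).trans (hC z.1.1 z.2))
  rw [integral_integral_swap hprod]
  refine integral_congr_ae (.of_forall fun x => ?_)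
  exact (integral_prod_mul (fun h => f h x) (fun h => f h x)).trans (sq _).symm

end Voters

/-- C-bound with self-labeling: the target risk of the ρ-weighted majority vote is
bounded by the self-labeled C-bound plus the labeling deviation term. -/
theorem c_bound_self_labeling
    {X H : Type*} [MeasurableSpace X] [MeasurableSpace H]
    (PT : Measure (X × ℝ)) [IsProbabilityMeasure PT]
    (DT : Measure X) (hDT : PT.map Prod.fst = DT)
    (ρ : Measure H) [IsProbabilityMeasure ρ]
    (f : H → X → ℝ)
    (hmeas : Measurable (fun p : H × X => f p.1 p.2))
    (hbound : ∀ h x, |f h x| ≤ 1)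
    (hY : ∀ᵐ p ∂PT, p.2 = 1 ∨ p.2 = -1)
    (l : X → ℝ) (hl : Measurable l) (hlY : ∀ x, l x = 1 ∨ l x = -1)
    (hpos : 0 < ∫ x, l x * ∫ h, f h x ∂ρ ∂DT) :
    (PT {p : X × ℝ | p.2 * ∫ h, f h p.1 ∂ρ ≤ 0}).toReal ≤
      1 - (∫ x, l x * ∫ h, f h x ∂ρ ∂DT) ^ 2 /
          (∫ q : H × H, (∫ x, f q.1 x * f q.2 x ∂DT) ∂(ρ.prod ρ)) +
        (1 / 2) * ∫ p, |p.2 - l p.1| ∂PT := by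
  subst hDT
  have := Measure.isProbabilityMeasure_map (μ := PT) measurable_fst.aemeasurable
  set g : X → ℝ := fun x => ∫ h, f h x ∂ρ
  have hg : Measurable g := hmeas.stronglyMeasurable.integral_prod_left.measurable
  have hgb : ∀ x, |g x| ≤ 1 := fun x => by
    simpa using norm_integral_le_of_norm_le_const (μ := ρ) (f := fun h => f h x)
      (.of_forall fun h => (hbound h x : ‖f h x‖ ≤ 1))
  have hlg : Measurable fun x => l x * g x := hl.mul hg
  have hmargin := measureReal_nonpos_le_one_sub_sq_integral_div (μ := PT.map Prod.fst) hlg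
    (MemLp.of_bound hlg.aestronglyMeasurable 1 (.of_forall fun x => by
      rw [Real.norm_eq_abs, abs_mul]; rcases hlY x with h | h <;> simpa [h] using hgb x)) hpos.le
  have hsq : ∀ x, (l x * g x) ^ 2 = g x ^ 2 := fun x => by
    rcases hlY x with h | h <;> simp [h]
  simp_rw [hsq] at hmargin
  rw [map_measureReal_apply measurable_fst (measurableSet_le hlg measurable_const)] at hmargin
  rw [← measureReal_def, integral_prod_integral_mul_eq_integral_sq ρ _ hmeas hbound]
  have hlabel := measureReal_mul_nonpos_le_self_labeling PT hg hl hlY hY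
  simp only [g, Set.preimage_ofPred_eq] at hmargin hlabel
  linarith
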